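/- arXiv:2403.13757 — 5 statements merged into one kernel-verified Lean document; each statement's English description precedes it below -/
import Mathlib

section
/- Let 0 < Δ < 1/2 and μ ≥ 0 be real. Then the series ∑_{n=0}^∞ Γ(Δ+n+μ)Γ(Δ+n) / (Γ(1+n+μ)Γ(1+n)) converges and equals Γ(Δ)² Γ(Δ+μ) / (2 cos(πΔ) Γ(2Δ) Γ(1+μ−Δ)). -/
/-!
Each factor `Γ(b+n)Γ(c-b)/Γ(c+n)` is Euler's beta integral `∫₀¹ t^(b+n-1) (1-t)^(c-b-1) dt`.
Summing the binomial series `∑ Γ(a+n)/n! tⁿ = Γ(a) (1-t)^(-a)` under the integral (legitimate since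
every term is nonnegative) leaves `Γ(a) B(b, c-a-b)`, which is Gauss's summation theorem for
`₂F₁(a, b; c; 1)`. For `a = Δ`, `b = Δ + μ`, `c = 1 + μ` the reflection formula, applied to `Δ` and
to `2Δ`, rewrites `Γ(1-2Δ)/Γ(1-Δ)` as `Γ(Δ)/(2 cos(πΔ) Γ(2Δ))`.
-/

open MeasureTheory Set Real
open scoped Nat

theorem MeasureTheory.hasSum_integral_of_nonneg {α ι : Type*} [MeasurableSpace α]
    {μ : Measure α} [Countable ι] {F : ι → α → ℝ} {f : α → ℝ}
    (hF_meas : ∀ n, AEStronglyMeasurable (F n) μ) (hF_nonneg : ∀ n, 0 ≤ᵐ[μ] F n)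
    (hf : Integrable f μ) (h_lim : ∀ᵐ a ∂μ, HasSum (fun n => F n a) (f a)) :
    HasSum (fun n => ∫ a, F n a ∂μ) (∫ a, f a ∂μ) :=
  hasSum_integral_of_dominated_convergence F hF_meas
    (fun n => (hF_nonneg n).mono fun _ h => (Real.norm_of_nonneg h).le)
    (h_lim.mono fun _ h => h.summable)
    (hf.congr (h_lim.mono fun _ h => h.tsum_eq.symm)) h_lim

namespace Real

theorem Gamma_add_nat_eq_ascPochhammer_mul {a : ℝ} (ha : ∀ k : ℕ, a ≠ -k) (n : ℕ) :
    Gamma (a + n) = (ascPochhammer ℝ n).eval a * Gamma a := by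
  induction n with
  | zero => simp
  | succ n ih =>
    have hn : a + n ≠ 0 := fun h => ha n (by linarith)
    rw [Nat.cast_succ, ← add_assoc, Gamma_add_one hn, ih, ascPochhammer_succ_right]
    simp only [Polynomial.eval_mul, Polynomial.eval_add, Polynomial.eval_X,
      Polynomial.eval_natCast]
    ring

theorem choose_add_nat_sub_one_eq_Gamma_div {a : ℝ} (ha : ∀ k : ℕ, a ≠ -k) (n : ℕ) :
    Ring.choose (a + n - 1) n = Gamma (a + n) / (Gamma a * n !) := by
  rw [Ring.choose_eq_smul, Polynomial.descPochhammer_smeval_eq_ascPochhammer,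
    Polynomial.ascPochhammer_smeval_eq_eval, Gamma_add_nat_eq_ascPochhammer_mul ha,
    smul_eq_mul, show a + n - 1 - n + 1 = a by ring]
  field_simp [Gamma_ne_zero ha]

theorem hasSum_Gamma_add_div_factorial_mul_pow {a x : ℝ} (ha : ∀ k : ℕ, a ≠ -k)
    (hx : |x| < 1) :
    HasSum (fun n : ℕ => Gamma (a + n) / n ! * x ^ n) (Gamma a / (1 - x) ^ a) := by
  have h := (one_div_one_sub_rpow_hasFPowerSeriesOnBall_zero a).hasSum
    (y := x) (by simpa [← ofReal_norm] using hx)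
  simp only [FormalMultilinearSeries.ofScalars_apply_eq, zero_add, smul_eq_mul,
    choose_add_nat_sub_one_eq_Gamma_div ha] at h
  rw [← mul_one_div]
  refine (h.mul_left (Gamma a)).congr_fun fun n => ?_
  field_simp [Gamma_ne_zero ha]

theorem ofReal_rpow_mul_one_sub_rpow {p q t : ℝ} (ht : t ∈ Ioo 0 1) :
    ((t ^ (p - 1) * (1 - t) ^ (q - 1) : ℝ) : ℂ) =
      (t : ℂ) ^ ((p : ℂ) - 1) * (1 - (t : ℂ)) ^ ((q : ℂ) - 1) := by
  rw [Complex.ofReal_mul, Complex.ofReal_cpow ht.1.le, Complex.ofReal_cpow (by linarith [ht.2])]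
  push_cast
  ring_nf

theorem integrableOn_rpow_mul_one_sub_rpow {p q : ℝ} (hp : 0 < p) (hq : 0 < q) :
    IntegrableOn (fun t : ℝ => t ^ (p - 1) * (1 - t) ^ (q - 1)) (Ioo 0 1) := by
  have h := Complex.betaIntegral_convergent (u := p) (v := q) (by simpa) (by simpa)
  rw [intervalIntegrable_iff_integrableOn_Ioo_of_le zero_le_one] at h
  refine IntegrableOn.congr_fun h.re (fun t ht => ?_) measurableSet_Ioo
  rw [← ofReal_rpow_mul_one_sub_rpow ht]
  exact Complex.ofReal_re _

theorem integral_rpow_mul_one_sub_rpow {p q : ℝ} (hp : 0 < p) (hq : 0 < q) :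
    ∫ t in Ioo 0 1, t ^ (p - 1) * (1 - t) ^ (q - 1) = Gamma p * Gamma q / Gamma (p + q) := by
  have h := Complex.Gamma_mul_Gamma_eq_betaIntegral (s := p) (t := q) (by simpa) (by simpa)
  rw [Complex.betaIntegral, intervalIntegral.integral_of_le zero_le_one,
    integral_Ioc_eq_integral_Ioo, ← setIntegral_congr_fun measurableSet_Ioo
      (fun t ht => ofReal_rpow_mul_one_sub_rpow (p := p) (q := q) ht), integral_complex_ofReal,
    ← Complex.ofReal_add, Complex.Gamma_ofReal, Complex.Gamma_ofReal, Complex.Gamma_ofReal] at h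
  norm_cast at h
  rw [eq_div_iff (Gamma_pos_of_pos (by linarith)).ne']
  linarith

/-- Gauss's summation theorem `₂F₁(a, b; c; 1) = Γ(c)Γ(c-a-b)/(Γ(c-a)Γ(c-b))`, multiplied through
by `Γ(a)Γ(b)/Γ(c)`. -/
theorem hasSum_Gamma_mul_Gamma_div_Gamma_mul_factorial {a b c : ℝ} (ha : 0 < a) (hb : 0 < b)
    (habc : a + b < c) :
    HasSum (fun n : ℕ => Gamma (a + n) * Gamma (b + n) / (Gamma (c + n) * n !))
      (Gamma a * Gamma b * Gamma (c - a - b) / (Gamma (c - a) * Gamma (c - b))) := by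
  have ha' : ∀ k : ℕ, a ≠ -k := fun k => by linarith [k.cast_nonneg (α := ℝ)]
  set g : ℝ → ℝ := fun t => t ^ (b - 1) * (1 - t) ^ (c - b - 1)
  have hterm : ∀ n : ℕ, ∫ t in Ioo 0 1, Gamma (a + n) / n ! * t ^ n * g t
      = Gamma (a + n) / n ! * (Gamma (b + n) * Gamma (c - b) / Gamma (c + n)) := by
    intro n
    rw [show c + n = b + n + (c - b) by ring,
      ← integral_rpow_mul_one_sub_rpow (by positivity) (by linarith), ← integral_const_mul]
    refine setIntegral_congr_fun measurableSet_Ioo fun t ht => ?_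
    simp only [g, show b + n - 1 = n + (b - 1) by ring, rpow_add ht.1, rpow_natCast]
    ring
  have hlim : ∀ t ∈ Ioo (0 : ℝ) 1, HasSum (fun n : ℕ => Gamma (a + n) / n ! * t ^ n * g t)
      (Gamma a * (t ^ (b - 1) * (1 - t) ^ (c - a - b - 1))) := by
    intro t ht
    have h1t : 0 < 1 - t := by linarith [ht.2]
    have h := (hasSum_Gamma_add_div_factorial_mul_pow ha'
      (abs_lt.2 ⟨by linarith [ht.1], ht.2⟩)).mul_right (g t)
    rwa [show Gamma a / (1 - t) ^ a * g t = Gamma a * (t ^ (b - 1) * (1 - t) ^ (c - a - b - 1)) by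
      simp only [g, show c - b - 1 = a + (c - a - b - 1) by ring, rpow_add h1t]
      field_simp] at h
  have hnonneg : ∀ n : ℕ, ∀ t ∈ Ioo (0 : ℝ) 1, 0 ≤ Gamma (a + n) / n ! * t ^ n * g t := by
    intro n t ht
    have := Gamma_pos_of_pos (show 0 < a + n by positivity)
    have := rpow_nonneg (sub_nonneg.2 ht.2.le) (c - b - 1)
    have := ht.1
    positivity
  have hint : IntegrableOn (fun t => Gamma a * (t ^ (b - 1) * (1 - t) ^ (c - a - b - 1)))
      (Ioo 0 1) :=
    (integrableOn_rpow_mul_one_sub_rpow hb (by linarith)).const_mul _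
  have hsum := hasSum_integral_of_nonneg (μ := volume.restrict (Ioo 0 1))
    (fun n => by fun_prop) (fun n => ae_restrict_of_forall_mem measurableSet_Ioo (hnonneg n))
    hint (ae_restrict_of_forall_mem measurableSet_Ioo hlim)
  rw [integral_const_mul, integral_rpow_mul_one_sub_rpow hb (by linarith),
    show b + (c - a - b) = c - a by ring] at hsum
  simp only [hterm] at hsum
  rw [show Gamma a * Gamma b * Gamma (c - a - b) / (Gamma (c - a) * Gamma (c - b))
    = Gamma a * (Gamma b * Gamma (c - a - b) / Gamma (c - a)) / Gamma (c - b) by ring]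
  refine (hsum.div_const _).congr_fun fun n => ?_
  have := Gamma_pos_of_pos (show 0 < c - b by linarith)
  have := Gamma_pos_of_pos (show 0 < c + n by linarith [n.cast_nonneg (α := ℝ)])
  field_simp

theorem Gamma_two_mul_mul_Gamma_one_sub_two_mul {s : ℝ} (hs : cos (π * s) ≠ 0) :
    Gamma (2 * s) * Gamma (1 - 2 * s) * (2 * cos (π * s)) = Gamma s * Gamma (1 - s) := by
  rw [Gamma_mul_Gamma_one_sub, Gamma_mul_Gamma_one_sub, show π * (2 * s) = 2 * (π * s) by ring,
    sin_two_mul]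
  rcases eq_or_ne (sin (π * s)) 0 with h | h
  · simp [h]
  · field_simp

end Real

theorem gauss_sum_gamma_ratio (Δ μ : ℝ) (hΔ0 : 0 < Δ) (hΔ : Δ < 1 / 2) (hμ : 0 ≤ μ) :
    Summable (fun n : ℕ =>
      Real.Gamma (Δ + n + μ) * Real.Gamma (Δ + n) /
        (Real.Gamma (1 + n + μ) * Real.Gamma (1 + n))) ∧
    (∑' n : ℕ,
        Real.Gamma (Δ + n + μ) * Real.Gamma (Δ + n) /
          (Real.Gamma (1 + n + μ) * Real.Gamma (1 + n))) =
      Real.Gamma Δ ^ 2 * Real.Gamma (Δ + μ) /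
        (2 * Real.cos (Real.pi * Δ) * Real.Gamma (2 * Δ) * Real.Gamma (1 + μ - Δ)) := by
  have hsum := hasSum_Gamma_mul_Gamma_div_Gamma_mul_factorial (a := Δ) (b := Δ + μ)
    (c := 1 + μ) hΔ0 (by positivity) (by linarith)
  rw [show 1 + μ - Δ - (Δ + μ) = 1 - 2 * Δ by ring, show 1 + μ - (Δ + μ) = 1 - Δ by ring] at hsum
  have hcos : cos (π * Δ) ≠ 0 :=
    (cos_pos_of_mem_Ioo ⟨by nlinarith [pi_pos], by nlinarith [pi_pos]⟩).ne'
  have hrefl := Gamma_two_mul_mul_Gamma_one_sub_two_mul hcos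
  have := Gamma_pos_of_pos (show 0 < 1 - Δ by linarith)
  have := Gamma_pos_of_pos (show 0 < 2 * Δ by linarith)
  have := Gamma_pos_of_pos (show 0 < 1 + μ - Δ by linarith)
  rw [show Gamma Δ * Gamma (Δ + μ) * Gamma (1 - 2 * Δ) / (Gamma (1 + μ - Δ) * Gamma (1 - Δ))
    = Gamma Δ ^ 2 * Gamma (Δ + μ) / (2 * cos (π * Δ) * Gamma (2 * Δ) * Gamma (1 + μ - Δ)) by
      rw [div_eq_div_iff (by positivity) (by positivity)]
      linear_combination Gamma Δ * Gamma (Δ + μ) * Gamma (1 + μ - Δ) * hrefl] at hsum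
  have h : HasSum (fun n : ℕ => Gamma (Δ + n + μ) * Gamma (Δ + n) /
      (Gamma (1 + n + μ) * Gamma (1 + n))) _ := hsum.congr_fun fun n => by
    rw [add_right_comm Δ, add_right_comm 1 (n : ℝ), add_comm 1 (n : ℝ), Gamma_nat_eq_factorial]
    ring
  exact ⟨h.summable, h.tsum_eq⟩
end

section
/- The map ρ(w) = (1 − √(1−w))/(1 + √(1−w)) (principal square root) sends the cut plane ℂ ∖ [1, ∞) into the open unit disk, and satisfies w = 4ρ(w)/(1 + ρ(w))² for all w in the cut plane. -/
/-!
With `s = √(1 - w)`, the cut `[1, ∞)` is exactly where `1 - w` leaves the slit plane, so on the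
cut plane `s` lies in the open right half-plane. The Cayley transform `s ↦ (1 - s)/(1 + s)`
maps that half-plane into the unit disk, and the identity `4ρ/(1 + ρ)² = 1 - s²` is pure algebra.
-/

open Complex Real

lemma Complex.one_sub_mem_slitPlane_iff {w : ℂ} :
    1 - w ∈ slitPlane ↔ ¬(w.im = 0 ∧ 1 ≤ w.re) := by
  rw [mem_slitPlane_iff, sub_re, sub_im, one_re, one_im]
  constructor
  · rintro (hre | him) ⟨hw_im, hw_re⟩
    · linarith
    · exact him (by rw [hw_im, sub_zero])
  · intro h
    by_cases him : w.im = 0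
    · exact Or.inl (by linarith [not_le.mp fun hre => h ⟨him, hre⟩])
    · exact Or.inr (by rwa [zero_sub, neg_ne_zero])

lemma Complex.re_cpow_ofReal_pos {z : ℂ} (hz : z ∈ slitPlane) {x : ℝ} (hx : |x| ≤ 1 / 2) :
    0 < (z ^ (x : ℂ)).re := by
  rw [cpow_def_of_ne_zero (slitPlane_ne_zero hz), exp_re, im_mul_ofReal, log_im]
  have harg : |z.arg| < π :=
    abs_lt.mpr ⟨neg_pi_lt_arg z, (arg_le_pi z).lt_of_ne (slitPlane_arg_ne_pi hz)⟩
  have hcos : 0 < Real.cos (z.arg * x) := by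
    refine Real.cos_pos_of_mem_Ioo (abs_lt.mp ?_)
    calc |z.arg * x| = |z.arg| * |x| := abs_mul _ _
      _ < π * (1 / 2) :=
        mul_lt_mul_of_lt_of_le_of_nonneg_of_pos harg hx (abs_nonneg _) (by norm_num)
      _ = π / 2 := by ring
  positivity

lemma Complex.norm_one_sub_lt_norm_one_add {s : ℂ} (hs : 0 < s.re) : ‖1 - s‖ < ‖1 + s‖ := by
  refine (pow_lt_pow_iff_left₀ (norm_nonneg _) (norm_nonneg _) two_ne_zero).mp ?_
  rw [Complex.sq_norm, Complex.sq_norm, normSq_apply, normSq_apply]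
  simp only [sub_re, sub_im, add_re, add_im, one_re, one_im]
  nlinarith

lemma Complex.norm_one_sub_div_one_add_lt_one {s : ℂ} (hs : 0 < s.re) :
    ‖(1 - s) / (1 + s)‖ < 1 := by
  have hden : 0 < ‖1 + s‖ := (norm_nonneg _).trans_lt (norm_one_sub_lt_norm_one_add hs)
  rw [norm_div, div_lt_one hden]
  exact norm_one_sub_lt_norm_one_add hs

lemma four_mul_div_one_add_sq_of_one_sub_div_one_add {K : Type*} [Field K] {s : K}
    (h2 : (2 : K) ≠ 0) (hs : 1 + s ≠ 0) :
    4 * ((1 - s) / (1 + s)) / (1 + (1 - s) / (1 + s)) ^ 2 = 1 - s ^ 2 := by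
  have hsum : 1 + (1 - s) / (1 + s) = 2 / (1 + s) := by
    field_simp
    ring
  rw [hsum]
  field_simp
  ring

/-- The radial coordinate map `ρ(w) = (1 − √(1−w))/(1 + √(1−w))`, with the principal
square root, sends the cut plane `ℂ ∖ [1, ∞)` into the open unit disk and satisfies
`w = 4ρ/(1+ρ)²`. -/
theorem radial_coordinate (w : ℂ) (hw : ¬ (w.im = 0 ∧ 1 ≤ w.re)) :
    ‖(1 - (1 - w) ^ ((1 : ℂ) / 2)) / (1 + (1 - w) ^ ((1 : ℂ) / 2))‖ < 1 ∧
    w = 4 * ((1 - (1 - w) ^ ((1 : ℂ) / 2)) / (1 + (1 - w) ^ ((1 : ℂ) / 2))) /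
          (1 + (1 - (1 - w) ^ ((1 : ℂ) / 2)) / (1 + (1 - w) ^ ((1 : ℂ) / 2))) ^ 2 := by
  have hexp : (1 : ℂ) / 2 = ((1 / 2 : ℝ) : ℂ) := by push_cast; rfl
  set s := (1 - w) ^ ((1 : ℂ) / 2) with hs_def
  have hs_re : 0 < s.re := by
    rw [hs_def, hexp]
    exact re_cpow_ofReal_pos (one_sub_mem_slitPlane_iff.mpr hw) (by norm_num [abs_of_pos])
  have hs_sq : s ^ 2 = 1 - w := by
    rw [hs_def, one_div]
    exact cpow_ofNat_inv_pow _ 2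
  have hden : 1 + s ≠ 0 :=
    norm_pos_iff.mp ((norm_nonneg _).trans_lt (norm_one_sub_lt_norm_one_add hs_re))
  refine ⟨norm_one_sub_div_one_add_lt_one hs_re, ?_⟩
  rw [four_mul_div_one_add_sq_of_one_sub_div_one_add two_ne_zero hden, hs_sq]
  ring
end

section
/- For real Δ > 0, the ratio ∑_{k=1}^∞ [(2/r₀) sinh(π k r₀)]^{−2Δ} / [r₀^{2Δ} e^{−2πΔ r₀}] tends to 1 as r₀ → ∞. -/
open Filter Topology

-- Pointwise identity: for r₀ > 0, each term of the ratio simplifies to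
-- q^k * (1 - ε^{k+1})^{-2Δ} with q = exp(-2πΔr₀).
lemma lbh_term_eq (Δ r₀ : ℝ) (hr : 0 < r₀) (k : ℕ) :
    ((2 / r₀) * Real.sinh (Real.pi * (k + 1) * r₀)) ^ (-(2 * Δ)) /
      (r₀ ^ (2 * Δ) * Real.exp (-(2 * Real.pi * Δ * r₀)))
    = Real.exp (-(2 * Real.pi * Δ * r₀)) ^ k *
        (1 - Real.exp (-(2 * Real.pi * ((k : ℝ) + 1) * r₀))) ^ (-(2 * Δ)) := by
  have hπ := Real.pi_pos
  set p := 2 * Δ with hp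
  have hθ : (0:ℝ) < Real.pi * (k + 1) * r₀ := by positivity
  have hsinh : 0 < Real.sinh (Real.pi * (k + 1) * r₀) := by
    rw [Real.sinh_eq]
    have h := Real.exp_lt_exp.2 (neg_lt_self hθ)
    linarith
  have ha : 0 < (2 / r₀) * Real.sinh (Real.pi * (k + 1) * r₀) := by positivity
  set a := (2 / r₀) * Real.sinh (Real.pi * (k + 1) * r₀) with hadef
  set c := r₀ * Real.exp (-(Real.pi * r₀)) with hcdef
  have hc : 0 < c := by positivity
  -- denominator equals c ^ p
  have hden : r₀ ^ p * Real.exp (-(2 * Real.pi * Δ * r₀)) = c ^ p := by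
    rw [hcdef, Real.mul_rpow hr.le (Real.exp_pos _).le, ← Real.exp_mul]
    congr 2
    rw [hp]; ring
  -- a * c = exp(πkr₀) (1 - exp(-2π(k+1)r₀))
  have hac : a * c = Real.exp (Real.pi * k * r₀) *
      (1 - Real.exp (-(2 * Real.pi * ((k : ℝ) + 1) * r₀))) := by
    rw [hadef, hcdef, Real.sinh_eq]
    have h0 : 2 / r₀ * ((Real.exp (Real.pi * (k + 1) * r₀) -
        Real.exp (-(Real.pi * (k + 1) * r₀))) / 2) * (r₀ * Real.exp (-(Real.pi * r₀)))
        = (Real.exp (Real.pi * (k + 1) * r₀) - Real.exp (-(Real.pi * (k + 1) * r₀))) *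
          Real.exp (-(Real.pi * r₀)) := by
      field_simp
    have h1 : Real.exp (Real.pi * (↑k + 1) * r₀) * Real.exp (-(Real.pi * r₀)) =
        Real.exp (Real.pi * k * r₀) := by
      rw [← Real.exp_add]; congr 1; ring
    have h2 : Real.exp (-(Real.pi * (↑k + 1) * r₀)) * Real.exp (-(Real.pi * r₀)) =
        Real.exp (Real.pi * k * r₀) * Real.exp (-(2 * Real.pi * ((k : ℝ) + 1) * r₀)) := by
      rw [← Real.exp_add, ← Real.exp_add]; congr 1; ring
    rw [h0, sub_mul, h1, h2]
    ring
  have hexp1 : (0:ℝ) < 1 - Real.exp (-(2 * Real.pi * ((k : ℝ) + 1) * r₀)) := by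
    have h : Real.exp (-(2 * Real.pi * ((k : ℝ) + 1) * r₀)) < 1 := by
      rw [Real.exp_lt_one_iff]
      have : (0:ℝ) < 2 * Real.pi * ((k : ℝ) + 1) * r₀ := by positivity
      linarith
    linarith
  calc a ^ (-p) / (r₀ ^ p * Real.exp (-(2 * Real.pi * Δ * r₀)))
      = a ^ (-p) * c ^ (-p) := by
        rw [hden, Real.rpow_neg hc.le, div_eq_mul_inv]
    _ = (a * c) ^ (-p) := (Real.mul_rpow ha.le hc.le).symm
    _ = Real.exp (Real.pi * k * r₀) ^ (-p) *
        (1 - Real.exp (-(2 * Real.pi * ((k : ℝ) + 1) * r₀))) ^ (-p) := by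
        rw [hac, Real.mul_rpow (Real.exp_pos _).le hexp1.le]
    _ = Real.exp (-(2 * Real.pi * Δ * r₀)) ^ k *
        (1 - Real.exp (-(2 * Real.pi * ((k : ℝ) + 1) * r₀))) ^ (-p) := by
        congr 1
        rw [← Real.exp_mul, ← Real.exp_nat_mul]
        congr 1
        rw [hp]; ring

-- Squeeze bounds for fixed r₀ > 0.
lemma lbh_bounds (Δ r₀ : ℝ) (hΔ : 0 < Δ) (hr : 0 < r₀) :
    1 ≤ (∑' k : ℕ, ((2 / r₀) * Real.sinh (Real.pi * (k + 1) * r₀)) ^ (-(2 * Δ))) /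
          (r₀ ^ (2 * Δ) * Real.exp (-(2 * Real.pi * Δ * r₀))) ∧
    (∑' k : ℕ, ((2 / r₀) * Real.sinh (Real.pi * (k + 1) * r₀)) ^ (-(2 * Δ))) /
          (r₀ ^ (2 * Δ) * Real.exp (-(2 * Real.pi * Δ * r₀)))
      ≤ (1 - Real.exp (-(2 * Real.pi * r₀))) ^ (-(2 * Δ)) *
          (1 - Real.exp (-(2 * Real.pi * Δ * r₀)))⁻¹ := by
  have hπ := Real.pi_pos
  set q := Real.exp (-(2 * Real.pi * Δ * r₀)) with hqdef
  have hq0 : 0 < q := Real.exp_pos _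
  have hq1 : q < 1 := by
    rw [hqdef, Real.exp_lt_one_iff]
    have : (0:ℝ) < 2 * Real.pi * Δ * r₀ := by positivity
    linarith
  have hε1 : ∀ k : ℕ, Real.exp (-(2 * Real.pi * ((k : ℝ) + 1) * r₀)) < 1 := by
    intro k
    rw [Real.exp_lt_one_iff]
    have : (0:ℝ) < 2 * Real.pi * ((k : ℝ) + 1) * r₀ := by positivity
    linarith
  have hεle : ∀ k : ℕ, 1 - Real.exp (-(2 * Real.pi * r₀)) ≤
      1 - Real.exp (-(2 * Real.pi * ((k : ℝ) + 1) * r₀)) := by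
    intro k
    have hk : (0:ℝ) ≤ (k : ℝ) := Nat.cast_nonneg k
    have hprod : (0:ℝ) ≤ 2 * Real.pi * (k : ℝ) * r₀ := by positivity
    have h : Real.exp (-(2 * Real.pi * ((k : ℝ) + 1) * r₀)) ≤
        Real.exp (-(2 * Real.pi * r₀)) := by
      apply Real.exp_le_exp.2
      nlinarith
    linarith
  have hε01 : 0 < 1 - Real.exp (-(2 * Real.pi * r₀)) := by
    have h := hε1 0
    simp only [Nat.cast_zero, zero_add, mul_one] at h
    linarith
  set M := (1 - Real.exp (-(2 * Real.pi * r₀))) ^ (-(2 * Δ)) with hM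
  have hM1 : 1 ≤ M := by
    rw [hM]
    apply Real.one_le_rpow_of_pos_of_le_one_of_nonpos hε01
    · nlinarith [Real.exp_pos (-(2 * Real.pi * r₀))]
    · nlinarith
  have hterm : ∀ k : ℕ,
      ((2 / r₀) * Real.sinh (Real.pi * (k + 1) * r₀)) ^ (-(2 * Δ)) /
        (r₀ ^ (2 * Δ) * Real.exp (-(2 * Real.pi * Δ * r₀)))
      = q ^ k * (1 - Real.exp (-(2 * Real.pi * ((k : ℝ) + 1) * r₀))) ^ (-(2 * Δ)) :=
    fun k => lbh_term_eq Δ r₀ hr k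
  have htermle : ∀ k : ℕ,
      q ^ k * (1 - Real.exp (-(2 * Real.pi * ((k : ℝ) + 1) * r₀))) ^ (-(2 * Δ))
        ≤ M * q ^ k := by
    intro k
    rw [mul_comm M]
    apply mul_le_mul_of_nonneg_left _ (pow_nonneg hq0.le k)
    rw [hM]
    exact Real.rpow_le_rpow_of_nonpos hε01 (hεle k) (by nlinarith)
  have htermpos : ∀ k : ℕ,
      0 < q ^ k * (1 - Real.exp (-(2 * Real.pi * ((k : ℝ) + 1) * r₀))) ^ (-(2 * Δ)) := by
    intro k
    have h1 : (0:ℝ) < 1 - Real.exp (-(2 * Real.pi * ((k : ℝ) + 1) * r₀)) := by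
      have := hε1 k; linarith
    positivity
  have hsumM : Summable (fun k : ℕ => M * q ^ k) :=
    (summable_geometric_of_lt_one hq0.le hq1).mul_left M
  have hsum : Summable (fun k : ℕ =>
      q ^ k * (1 - Real.exp (-(2 * Real.pi * ((k : ℝ) + 1) * r₀))) ^ (-(2 * Δ))) :=
    Summable.of_nonneg_of_le (fun k => (htermpos k).le) htermle hsumM
  have hrw : (∑' k : ℕ, ((2 / r₀) * Real.sinh (Real.pi * (k + 1) * r₀)) ^ (-(2 * Δ))) /
        (r₀ ^ (2 * Δ) * Real.exp (-(2 * Real.pi * Δ * r₀)))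
      = ∑' k : ℕ, q ^ k * (1 - Real.exp (-(2 * Real.pi * ((k : ℝ) + 1) * r₀))) ^ (-(2 * Δ)) := by
    rw [← tsum_div_const]
    exact tsum_congr fun k => hterm k
  constructor
  · rw [hrw]
    calc (1:ℝ) ≤ M := hM1
      _ = q ^ 0 * (1 - Real.exp (-(2 * Real.pi * ((0:ℕ) + 1) * r₀))) ^ (-(2 * Δ)) := by
          rw [hM]
          simp
      _ ≤ ∑' k : ℕ, q ^ k * (1 - Real.exp (-(2 * Real.pi * ((k : ℝ) + 1) * r₀))) ^ (-(2 * Δ)) :=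
          Summable.le_tsum hsum 0 (fun j _ => (htermpos j).le)
  · rw [hrw]
    calc (∑' k : ℕ, q ^ k * (1 - Real.exp (-(2 * Real.pi * ((k : ℝ) + 1) * r₀))) ^ (-(2 * Δ)))
        ≤ ∑' k : ℕ, M * q ^ k := Summable.tsum_le_tsum htermle hsum hsumM
      _ = M * (1 - q)⁻¹ := by
          rw [tsum_mul_left, tsum_geometric_of_lt_one hq0.le hq1]

theorem large_black_hole_decay (Δ : ℝ) (hΔ : 0 < Δ) :
    Tendsto (fun r₀ : ℝ =>
        (∑' k : ℕ, ((2 / r₀) * Real.sinh (Real.pi * (k + 1) * r₀)) ^ (-(2 * Δ))) /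
          (r₀ ^ (2 * Δ) * Real.exp (-(2 * Real.pi * Δ * r₀))))
      atTop (nhds 1) := by
  have hπ := Real.pi_pos
  -- auxiliary limits
  have hε : Tendsto (fun r₀ : ℝ => Real.exp (-(2 * Real.pi * r₀))) atTop (nhds 0) := by
    have h1 : Tendsto (fun r₀ : ℝ => 2 * Real.pi * r₀) atTop atTop :=
      Tendsto.const_mul_atTop (by positivity) tendsto_id
    exact Real.tendsto_exp_atBot.comp (tendsto_neg_atTop_atBot.comp h1)
  have hq : Tendsto (fun r₀ : ℝ => Real.exp (-(2 * Real.pi * Δ * r₀))) atTop (nhds 0) := by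
    have h1 : Tendsto (fun r₀ : ℝ => 2 * Real.pi * Δ * r₀) atTop atTop :=
      Tendsto.const_mul_atTop (by positivity) tendsto_id
    exact Real.tendsto_exp_atBot.comp (tendsto_neg_atTop_atBot.comp h1)
  have hb1 : Tendsto (fun r₀ : ℝ => 1 - Real.exp (-(2 * Real.pi * r₀))) atTop (nhds 1) := by
    have := tendsto_const_nhds (x := (1:ℝ)) (f := atTop (α := ℝ)) |>.sub hε
    simpa using this
  have hb2 : Tendsto (fun r₀ : ℝ => 1 - Real.exp (-(2 * Real.pi * Δ * r₀))) atTop (nhds 1) := by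
    have := tendsto_const_nhds (x := (1:ℝ)) (f := atTop (α := ℝ)) |>.sub hq
    simpa using this
  have hUlim : Tendsto (fun r₀ : ℝ =>
      (1 - Real.exp (-(2 * Real.pi * r₀))) ^ (-(2 * Δ)) *
        (1 - Real.exp (-(2 * Real.pi * Δ * r₀)))⁻¹) atTop (nhds 1) := by
    have h1 : Tendsto (fun r₀ : ℝ => (1 - Real.exp (-(2 * Real.pi * r₀))) ^ (-(2 * Δ)))
        atTop (nhds 1) := by
      have := hb1.rpow_const (p := -(2 * Δ)) (Or.inl one_ne_zero)
      simpa using this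
    have h2 : Tendsto (fun r₀ : ℝ => (1 - Real.exp (-(2 * Real.pi * Δ * r₀)))⁻¹)
        atTop (nhds 1) := by
      have := hb2.inv₀ one_ne_zero
      simpa using this
    have := h1.mul h2
    simpa using this
  apply tendsto_of_tendsto_of_tendsto_of_le_of_le' tendsto_const_nhds hUlim
  · filter_upwards [eventually_gt_atTop (0:ℝ)] with r₀ hr
    exact (lbh_bounds Δ r₀ hΔ hr).1
  · filter_upwards [eventually_gt_atTop (0:ℝ)] with r₀ hr
    exact (lbh_bounds Δ r₀ hΔ hr).2
end

section
/- Let Δ > 0 be real, and for nonnegative integers n define c_n = Γ(Δ+n)² Γ(2Δ+n−1) / [Γ(Δ)² Γ(1+n) Γ(2Δ+2n−1)] (assume 2Δ − 1 > 0). Then c_n · 4^n · n^{3/2 − 2Δ} → √π · 4^{1−Δ} / Γ(Δ)² as n → ∞. -/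
/-!
Euler's limit formula `Γ(s) = lim n^s n! / (s (s+1) ⋯ (s+n))` gives
`Γ(a + n) / Γ(b + n) ~ n^(a - b)`.
The Legendre duplication formula splits `Γ(2Δ + 2n - 1)` into `Γ(Δ - 1/2 + n) Γ(Δ + n)` times
`2^(2Δ + 2n - 2) / √π`, which cancels the factor `4^n`; what remains is the constant
`√π 4^(1-Δ) / Γ(Δ)²` times the two ratios `Γ(Δ + n) / Γ(Δ - 1/2 + n)` and
`Γ(2Δ - 1 + n) / Γ(1 + n)`, whose powers of `n` cancel `n^(3/2 - 2Δ)`.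
-/

open Filter Topology
open scoped Nat

namespace Real

theorem ne_neg_natCast_of_pos {s : ℝ} (hs : 0 < s) (m : ℕ) : s ≠ -m :=
  ((neg_nonpos.mpr m.cast_nonneg).trans_lt hs).ne'

theorem Gamma_add_nat_eq_mul_prod {s : ℝ} (hs : ∀ m : ℕ, s ≠ -m) (n : ℕ) :
    Gamma (s + n) = Gamma s * ∏ j ∈ Finset.range n, (s + j) := by
  induction n with
  | zero => simp
  | succ n ih =>
    have hsn : s + n ≠ 0 := fun h => hs n (eq_neg_of_add_eq_zero_left h)
    rw [Nat.cast_succ, ← add_assoc, Gamma_add_one hsn, ih, Finset.prod_range_succ]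
    ring

theorem GammaSeq_eq_div {s : ℝ} (hs : ∀ m : ℕ, s ≠ -m) (n : ℕ) :
    GammaSeq s n = Gamma s * ((n : ℝ) ^ s * n !) / Gamma (s + (n + 1 : ℕ)) := by
  rw [GammaSeq, Gamma_add_nat_eq_mul_prod hs, mul_div_mul_left _ _ (Gamma_ne_zero hs)]

theorem tendsto_Gamma_add_nat_succ_div_factorial_mul_rpow {s : ℝ} (hs : ∀ m : ℕ, s ≠ -m) :
    Tendsto (fun n : ℕ => Gamma (s + (n + 1 : ℕ)) / (n ! * (n : ℝ) ^ s)) atTop (𝓝 1) := by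
  have hΓ := Gamma_ne_zero hs
  have h := tendsto_const_nhds (x := Gamma s) (f := atTop) |>.div (GammaSeq_tendsto_Gamma s) hΓ
  rw [div_self hΓ] at h
  refine h.congr fun n => ?_
  rw [Pi.div_apply, GammaSeq_eq_div hs, div_div_eq_mul_div, mul_div_mul_left _ _ hΓ,
    mul_comm ((n : ℝ) ^ s)]

theorem tendsto_Gamma_add_div_Gamma_mul_rpow {s : ℝ} (hs : ∀ m : ℕ, s ≠ -m) :
    Tendsto (fun n : ℕ => Gamma (s + n) / (Gamma n * (n : ℝ) ^ s)) atTop (𝓝 1) := by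
  have hpow : Tendsto (fun n : ℕ => ((n : ℝ) / (n + 1)) ^ s) atTop (𝓝 1) := by
    simpa using (tendsto_natCast_div_add_atTop (1 : ℝ)).rpow_const (p := s) (Or.inl one_ne_zero)
  rw [← tendsto_add_atTop_iff_nat 1]
  have h := (tendsto_Gamma_add_nat_succ_div_factorial_mul_rpow hs).mul hpow
  rw [mul_one] at h
  refine h.congr' ?_
  filter_upwards [eventually_gt_atTop 0] with n hn
  have hn' : (0 : ℝ) < n := by exact_mod_cast hn
  rw [Nat.cast_succ, Gamma_nat_eq_factorial, div_rpow hn'.le (by positivity)]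
  field_simp

theorem tendsto_Gamma_add_div_Gamma_add_mul_rpow {a b : ℝ} (ha : ∀ m : ℕ, a ≠ -m)
    (hb : ∀ m : ℕ, b ≠ -m) :
    Tendsto (fun n : ℕ => Gamma (a + n) / Gamma (b + n) * (n : ℝ) ^ (b - a))
      atTop (𝓝 1) := by
  have h := (tendsto_Gamma_add_div_Gamma_mul_rpow ha).div
    (tendsto_Gamma_add_div_Gamma_mul_rpow hb) one_ne_zero
  rw [div_one] at h
  refine h.congr' ?_
  filter_upwards [eventually_gt_atTop 0] with n hn
  have hn' : (0 : ℝ) < n := by exact_mod_cast hn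
  have hΓn : Gamma n ≠ 0 := (Gamma_pos_of_pos hn').ne'
  rw [Pi.div_apply, rpow_sub hn']
  field_simp

theorem Gamma_two_mul (s : ℝ) :
    Gamma (2 * s) = 2 ^ (2 * s - 1) / √π * Gamma s * Gamma (s + 1 / 2) := by
  rw [mul_assoc, Gamma_mul_Gamma_add_half, show 1 - 2 * s = -(2 * s - 1) by ring,
    rpow_neg zero_le_two]
  have h2 : (0 : ℝ) < 2 ^ (2 * s - 1) := by positivity
  field_simp

end Real

open Real

theorem mft_coeff_mul_eq_mul_Gamma_ratios {Δ : ℝ} (hΔ : 0 < 2 * Δ - 1) {n : ℕ} (hn : 0 < n) :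
    Gamma (Δ + n) ^ 2 * Gamma (2 * Δ + n - 1) /
        (Gamma Δ ^ 2 * Gamma (1 + n) * Gamma (2 * Δ + 2 * n - 1)) * 4 ^ n *
        (n : ℝ) ^ (3 / 2 - 2 * Δ) =
      √π * 4 ^ (1 - Δ) / Gamma Δ ^ 2 *
        (Gamma (Δ + n) / Gamma (Δ - 1 / 2 + n) * (n : ℝ) ^ (Δ - 1 / 2 - Δ) *
          (Gamma (2 * Δ - 1 + n) / Gamma (1 + n) * (n : ℝ) ^ (1 - (2 * Δ - 1)))) := by
  have hn' : (0 : ℝ) < n := by exact_mod_cast hn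
  have hdup : Gamma (2 * Δ + 2 * n - 1) =
      4 ^ n / 4 ^ (1 - Δ) / √π * Gamma (Δ - 1 / 2 + n) * Gamma (Δ + n) := by
    have h4 : (4 : ℝ) = 2 ^ (2 : ℝ) := by norm_num
    rw [show 2 * Δ + 2 * n - 1 = 2 * (Δ - 1 / 2 + n) by ring, Gamma_two_mul,
      show Δ - 1 / 2 + n + 1 / 2 = Δ + n by ring, ← rpow_natCast, h4, ← rpow_mul zero_le_two,
      ← rpow_mul zero_le_two, ← rpow_sub two_pos]
    ring_nf
  have hpow : (n : ℝ) ^ (3 / 2 - 2 * Δ) =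
      (n : ℝ) ^ (Δ - 1 / 2 - Δ) * (n : ℝ) ^ (1 - (2 * Δ - 1)) := by
    rw [← rpow_add hn']
    ring_nf
  have hΓΔ : Gamma Δ ≠ 0 := (Gamma_pos_of_pos (by linarith)).ne'
  have hΓa : Gamma (Δ + n) ≠ 0 := (Gamma_pos_of_pos (by linarith)).ne'
  have hΓb : Gamma (Δ - 1 / 2 + n) ≠ 0 := (Gamma_pos_of_pos (by linarith)).ne'
  have hΓn : Gamma (1 + n) ≠ 0 := (Gamma_pos_of_pos (by linarith)).ne'
  rw [hdup, hpow, show 2 * Δ + n - 1 = 2 * Δ - 1 + n by ring]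
  field_simp

theorem mft_ope_asymptotics_general (Δ : ℝ) (hΔ' : 0 < 2 * Δ - 1) :
    Tendsto (fun n : ℕ =>
        (Real.Gamma (Δ + n) ^ 2 * Real.Gamma (2 * Δ + n - 1) /
          (Real.Gamma Δ ^ 2 * Real.Gamma (1 + n) * Real.Gamma (2 * Δ + 2 * n - 1))) *
          4 ^ n * (n : ℝ) ^ (3 / 2 - 2 * Δ))
      atTop
      (nhds (Real.sqrt Real.pi * (4 : ℝ) ^ (1 - Δ) / Real.Gamma Δ ^ 2)) := by
  have ratio₁ := tendsto_Gamma_add_div_Gamma_add_mul_rpow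
    (ne_neg_natCast_of_pos (by linarith : 0 < Δ))
    (ne_neg_natCast_of_pos (by linarith : 0 < Δ - 1 / 2))
  have ratio₂ := tendsto_Gamma_add_div_Gamma_add_mul_rpow
    (ne_neg_natCast_of_pos hΔ') (ne_neg_natCast_of_pos one_pos)
  have h := (ratio₁.mul ratio₂).const_mul (√π * 4 ^ (1 - Δ) / Gamma Δ ^ 2)
  rw [mul_one, mul_one] at h
  refine h.congr' ?_
  filter_upwards [eventually_gt_atTop 0] with n hn
  exact (mft_coeff_mul_eq_mul_Gamma_ratios hΔ' hn).symm

theorem mft_ope_asymptotics (Δ : ℝ) (hΔ : 0 < Δ) (hΔ' : 0 < 2 * Δ - 1) :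
    Tendsto (fun n : ℕ =>
        (Real.Gamma (Δ + n) ^ 2 * Real.Gamma (2 * Δ + n - 1) /
          (Real.Gamma Δ ^ 2 * Real.Gamma (1 + n) * Real.Gamma (2 * Δ + 2 * n - 1))) *
          4 ^ n * (n : ℝ) ^ (3 / 2 - 2 * Δ))
      atTop
      (nhds (Real.sqrt Real.pi * (4 : ℝ) ^ (1 - Δ) / Real.Gamma Δ ^ 2)) :=
  mft_ope_asymptotics_general Δ hΔ'
end

section
/- For real Δ > 0, real r₀ > 0, and real t, θ with 0 < θ < 2π and |t| < θ, the series ∑_{k∈ℤ} [e^{r₀(θ+2πk)} + e^{−r₀(θ+2πk)} − e^{r₀ t} − e^{−r₀ t}]^{−Δ} converges absolutely, and its sum is invariant under θ ↦ 2π − θ together with summation reindexing (i.e., the BTZ boundary propagator is symmetric about θ = π at fixed t = 0). -/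
/-!
The bracket equals `2 cosh (r₀ (θ + 2πk)) - 2 cosh (r₀ t)`, which grows like `e^{2π r₀ |k|}`,
so apart from finitely many of them the terms are dominated by a geometric series in each
direction. For the symmetry, `k ↦ -(k + 1)` permutes `ℤ` and sends `θ + 2πk` to
`-((2π - θ) + 2πk)`, and `cosh` is even.
-/

open Real

lemma cosh_sub_cosh_mul_cosh_le {a b : ℝ} (c : ℝ) (ha : 0 ≤ a) (hb : 0 ≤ b) :
    (cosh a - cosh c) * cosh b ≤ cosh (a + b) - cosh c := by
  have hsinh : 0 ≤ sinh a * sinh b := mul_nonneg (sinh_nonneg_iff.2 ha) (sinh_nonneg_iff.2 hb)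
  have hcosh : 0 ≤ cosh c * (cosh b - 1) := mul_nonneg (cosh_pos c).le (sub_nonneg.2 (one_le_cosh b))
  rw [cosh_add]
  linarith

lemma summable_abs_cosh_sub_cosh_rpow_neg_of_abs_lt {a c L Δ : ℝ} (hc : |c| < a) (hL : 0 < L)
    (hΔ : 0 < Δ) : Summable fun n : ℕ => |cosh (a + L * n) - cosh c| ^ (-Δ) := by
  have ha : 0 < a := (abs_nonneg c).trans_lt hc
  set C := cosh a - cosh c
  have hC : 0 < C := sub_pos.2 (cosh_lt_cosh.2 (by rwa [abs_of_pos ha]))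
  have hbound (n : ℕ) : C / 2 * exp (L * n) ≤ |cosh (a + L * n) - cosh c| := by
    have hexp : exp (L * n) ≤ 2 * cosh (L * n) := by
      rw [cosh_eq]; linarith [exp_pos (-(L * n))]
    calc C / 2 * exp (L * n) ≤ C * cosh (L * n) := by nlinarith
      _ ≤ cosh (a + L * n) - cosh c := cosh_sub_cosh_mul_cosh_le c ha.le (by positivity)
      _ ≤ _ := le_abs_self _
  have hgeom : Summable fun n : ℕ => (C / 2) ^ (-Δ) * exp (-(L * Δ)) ^ n :=
    (summable_geometric_of_lt_one (exp_pos _).le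
      (exp_lt_one_iff.2 (neg_neg_of_pos (mul_pos hL hΔ)))).mul_left _
  refine hgeom.of_nonneg_of_le (fun n => by positivity) fun n => ?_
  calc |cosh (a + L * n) - cosh c| ^ (-Δ) ≤ (C / 2 * exp (L * n)) ^ (-Δ) :=
        rpow_le_rpow_of_nonpos (by positivity) (hbound n) (by linarith)
    _ = (C / 2) ^ (-Δ) * exp (-(L * Δ)) ^ n := by
        rw [mul_rpow (by positivity) (exp_pos _).le, ← exp_mul, ← exp_nat_mul]
        ring_nf

lemma summable_abs_cosh_sub_cosh_rpow_neg (a c : ℝ) {L Δ : ℝ} (hL : 0 < L) (hΔ : 0 < Δ) :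
    Summable fun n : ℕ => |cosh (a + L * n) - cosh c| ^ (-Δ) := by
  obtain ⟨N, hN⟩ := exists_nat_gt ((|c| - a) / L)
  have hc : |c| < a + L * N := by
    rw [div_lt_iff₀ hL] at hN
    linarith
  have hshift (n : ℕ) : a + L * N + L * n = a + L * ↑(n + N) := by
    push_cast
    ring
  exact (summable_nat_add_iff N).mp
    ((summable_abs_cosh_sub_cosh_rpow_neg_of_abs_lt hc hL hΔ).congr fun n => by rw [hshift])

noncomputable def btzImageTerm (Δ r₀ t θ : ℝ) (k : ℤ) : ℝ :=
  (exp (r₀ * (θ + 2 * π * k)) + exp (-(r₀ * (θ + 2 * π * k)))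
    - exp (r₀ * t) - exp (-(r₀ * t))) ^ (-Δ)

lemma btzImageTerm_neg_add_one (Δ r₀ t θ : ℝ) (k : ℤ) :
    btzImageTerm Δ r₀ t θ (-(k + 1)) = btzImageTerm Δ r₀ t (2 * π - θ) k := by
  have hreflect : r₀ * (θ + 2 * π * ↑(-(k + 1))) = -(r₀ * ((2 * π - θ) + 2 * π * k)) := by
    push_cast
    ring
  rw [btzImageTerm, btzImageTerm, hreflect, neg_neg, add_comm (exp (-_))]

lemma abs_btzImageTerm_le (Δ r₀ t θ : ℝ) (k : ℤ) :
    |btzImageTerm Δ r₀ t θ k| ≤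
      2 ^ (-Δ) * |cosh (r₀ * θ + 2 * π * r₀ * k) - cosh (r₀ * t)| ^ (-Δ) := by
  have hbase : exp (r₀ * (θ + 2 * π * k)) + exp (-(r₀ * (θ + 2 * π * k)))
      - exp (r₀ * t) - exp (-(r₀ * t))
      = 2 * (cosh (r₀ * θ + 2 * π * r₀ * k) - cosh (r₀ * t)) := by
    simp only [cosh_eq]
    ring_nf
  calc |btzImageTerm Δ r₀ t θ k|
      ≤ |2 * (cosh (r₀ * θ + 2 * π * r₀ * k) - cosh (r₀ * t))| ^ (-Δ) := by
        rw [← hbase]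
        exact abs_rpow_le_abs_rpow _ _
    _ = _ := by rw [abs_mul, abs_two, mul_rpow zero_le_two (abs_nonneg _)]

lemma summable_abs_btzImageTerm_nat {Δ r₀ : ℝ} (hΔ : 0 < Δ) (hr : 0 < r₀) (t θ : ℝ) :
    Summable fun n : ℕ => |btzImageTerm Δ r₀ t θ n| := by
  have hcosh := summable_abs_cosh_sub_cosh_rpow_neg (r₀ * θ) (r₀ * t)
    (L := 2 * π * r₀) (by positivity) hΔ
  exact (hcosh.mul_left _).of_nonneg_of_le (fun _ => abs_nonneg _) fun n => by
    simpa using abs_btzImageTerm_le Δ r₀ t θ n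

theorem summable_abs_btzImageTerm {Δ r₀ : ℝ} (hΔ : 0 < Δ) (hr : 0 < r₀) (t θ : ℝ) :
    Summable fun k : ℤ => |btzImageTerm Δ r₀ t θ k| :=
  .of_nat_of_neg_add_one (summable_abs_btzImageTerm_nat hΔ hr t θ) <| by
    simpa only [btzImageTerm_neg_add_one] using summable_abs_btzImageTerm_nat hΔ hr t (2 * π - θ)

theorem tsum_btzImageTerm_two_pi_sub (Δ r₀ t θ : ℝ) :
    ∑' k, btzImageTerm Δ r₀ t θ k = ∑' k, btzImageTerm Δ r₀ t (2 * π - θ) k := by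
  rw [← ((Equiv.addRight 1).trans (Equiv.neg ℤ)).tsum_eq]
  exact tsum_congr (btzImageTerm_neg_add_one Δ r₀ t θ)

theorem btz_images_summable_symmetric_general (Δ r₀ t θ : ℝ) (hΔ : 0 < Δ) (hr : 0 < r₀) :
    Summable (fun k : ℤ =>
      |(Real.exp (r₀ * (θ + 2 * Real.pi * k)) + Real.exp (-(r₀ * (θ + 2 * Real.pi * k)))
          - Real.exp (r₀ * t) - Real.exp (-(r₀ * t))) ^ (-Δ)|) ∧
    (∑' k : ℤ,
        (Real.exp (r₀ * (θ + 2 * Real.pi * k)) + Real.exp (-(r₀ * (θ + 2 * Real.pi * k)))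
          - Real.exp (r₀ * t) - Real.exp (-(r₀ * t))) ^ (-Δ)) =
    (∑' k : ℤ,
        (Real.exp (r₀ * ((2 * Real.pi - θ) + 2 * Real.pi * k)) +
            Real.exp (-(r₀ * ((2 * Real.pi - θ) + 2 * Real.pi * k)))
          - Real.exp (r₀ * t) - Real.exp (-(r₀ * t))) ^ (-Δ)) :=
  ⟨summable_abs_btzImageTerm hΔ hr t θ, tsum_btzImageTerm_two_pi_sub Δ r₀ t θ⟩

theorem btz_images_summable_symmetric (Δ r₀ t θ : ℝ) (hΔ : 0 < Δ) (hr : 0 < r₀)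
    (hθ0 : 0 < θ) (hθ2 : θ < 2 * Real.pi) (ht : |t| < θ) :
    Summable (fun k : ℤ =>
      |(Real.exp (r₀ * (θ + 2 * Real.pi * k)) + Real.exp (-(r₀ * (θ + 2 * Real.pi * k)))
          - Real.exp (r₀ * t) - Real.exp (-(r₀ * t))) ^ (-Δ)|) ∧
    (∑' k : ℤ,
        (Real.exp (r₀ * (θ + 2 * Real.pi * k)) + Real.exp (-(r₀ * (θ + 2 * Real.pi * k)))
          - Real.exp (r₀ * t) - Real.exp (-(r₀ * t))) ^ (-Δ)) =
    (∑' k : ℤ,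
        (Real.exp (r₀ * ((2 * Real.pi - θ) + 2 * Real.pi * k)) +
            Real.exp (-(r₀ * ((2 * Real.pi - θ) + 2 * Real.pi * k)))
          - Real.exp (r₀ * t) - Real.exp (-(r₀ * t))) ^ (-Δ)) :=
  btz_images_summable_symmetric_general Δ r₀ t θ hΔ hr
end
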